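/- Let d ≥ 1, let s = (s_1,…,s_d) be a scaling of positive integers, let D ⊆ ℝ^d be open, let 𝓛 = Σ_{|γ|=m} a_γ ∂^γ be a constant-coefficient operator of anisotropic order m with complex coefficients, let γ' < 0, let R > 0 and w ∈ ℝ^d. Then for every germ U over D the identity [𝓛(S^R_w U)]_{G^{γ'}((S^R_w)^{-1}D)} = R^{γ'+m} [𝓛U]_{G^{γ'}(D)} holds as an equality in [0,∞]. -/

import Mathlib

open scoped BigOperators ENNReal
open MeasureTheory

noncomputable section

namespace GermSchauder

variable {d : ℕ}

/-- Anisotropic distance determined by the scaling `s`. -/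
def adist (s : Fin d → ℕ) (x y : Fin d → ℝ) : ℝ :=
  ∑ i, |x i - y i| ^ ((s i : ℝ)⁻¹)

/-- Anisotropic open ball of radius `R` around `x`. -/
def aball (s : Fin d → ℕ) (x : Fin d → ℝ) (R : ℝ) : Set (Fin d → ℝ) :=
  {y | adist s x y < R}

/-- `P` is a complex polynomial function on `ℝ^d` of anisotropic degree at most `k`. -/
def IsAnisoPoly (s : Fin d → ℕ) (k : ℝ) (P : (Fin d → ℝ) → ℂ) : Prop :=
  ∃ p : MvPolynomial (Fin d) ℂ,
    (∀ γ ∈ p.support, ((∑ i, s i * γ i : ℕ) : ℝ) ≤ k) ∧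
    ∀ z, P z = MvPolynomial.eval (fun j => (z j : ℂ)) p

/-- A germ over `D`: a family of functions continuous on `D`. -/
def IsGerm (D : Set (Fin d → ℝ)) (U : (Fin d → ℝ) → (Fin d → ℝ) → ℂ) : Prop :=
  ∀ x ∈ D, ContinuousOn (U x) D

/-- The `G^η(D)` norm of a germ, valued in `[0,∞]`. -/
def germNorm (s : Fin d → ℕ) (D : Set (Fin d → ℝ)) (η : ℝ)
    (U : (Fin d → ℝ) → (Fin d → ℝ) → ℂ) : ℝ≥0∞ :=
  ⨅ M : {M : ℝ // 0 < M ∧ ∀ x ∈ D, ∀ y ∈ D,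
      ‖U x y‖ ≤ M * adist s x y ^ η}, ENNReal.ofReal M.1

/-- The `G^{η,α}(D)` seminorm of a germ, valued in `[0,∞]`. -/
def germHA (s : Fin d → ℕ) (D : Set (Fin d → ℝ)) (η α : ℝ)
    (U : (Fin d → ℝ) → (Fin d → ℝ) → ℂ) : ℝ≥0∞ :=
  ⨅ M : {M : ℝ // 0 < M ∧ ∀ x ∈ D, ∀ y ∈ D, ∃ P : (Fin d → ℝ) → ℂ,
      IsAnisoPoly s (⌊η⌋ : ℝ) P ∧ ∀ z ∈ D,
      ‖U x z - U y z - P z‖ ≤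
        M * adist s y z ^ α * (adist s x y + adist s y z) ^ (η - α)}, ENNReal.ofReal M.1

/-- The anisotropic rescaling/recentering map `S^R_w`. -/
def smap (s : Fin d → ℕ) (R : ℝ) (w : Fin d → ℝ) (y : Fin d → ℝ) : Fin d → ℝ :=
  fun i => w i + R ^ (s i) * y i

/-- The action of `S^R_w` on germs. -/
def sgerm (s : Fin d → ℕ) (R : ℝ) (w : Fin d → ℝ)
    (U : (Fin d → ℝ) → (Fin d → ℝ) → ℂ) : (Fin d → ℝ) → (Fin d → ℝ) → ℂ :=
  fun x y => U (smap s R w x) (smap s R w y)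

/-- First order partial derivative in direction `j`. -/
def pderiv1 (j : Fin d) (φ : (Fin d → ℝ) → ℝ) : (Fin d → ℝ) → ℝ :=
  fun x => fderiv ℝ φ x (Pi.single j 1)

/-- Multi-index partial derivative `∂^β`. -/
def pderivM (β : Fin d → ℕ) (φ : (Fin d → ℝ) → ℝ) : (Fin d → ℝ) → ℝ :=
  (List.finRange d).foldr (fun j ψ => (pderiv1 j)^[β j] ψ) φ

/-- The class `ℬ_k` of test functions: `C^k`, supported in the unit anisotropic
ball, with all partial derivatives of anisotropic degree at most `k` bounded by one. -/
structure TestB (s : Fin d → ℕ) (k : ℕ) where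
  toFun : (Fin d → ℝ) → ℝ
  contDiff : ContDiff ℝ k toFun
  support_subset : Function.support toFun ⊆ aball s 0 1
  deriv_le : ∀ β : Fin d → ℕ, (∑ i, s i * β i) ≤ k → ∀ y, |pderivM β toFun y| ≤ 1

/-- The rescaled and recentered test function `φ_x^λ`. -/
def tscale (s : Fin d → ℕ) (φ : (Fin d → ℝ) → ℝ) (x : Fin d → ℝ) (lam : ℝ) :
    (Fin d → ℝ) → ℝ :=
  fun y => (lam ^ (∑ i, s i))⁻¹ * φ (fun i => (lam ^ s i)⁻¹ * (y i - x i))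

/-- Multi-indices of anisotropic degree exactly `m`. -/
def midxEq (s : Fin d → ℕ) (m : ℕ) : Finset (Fin d → ℕ) :=
  (Fintype.piFinset fun _ => Finset.range (m + 1)).filter fun γ => ∑ i, s i * γ i = m

/-- Multi-indices of anisotropic degree at most `η`. -/
def midxLe (s : Fin d → ℕ) (η : ℝ) : Finset (Fin d → ℕ) :=
  (Fintype.piFinset fun _ => Finset.range (⌊η⌋₊ + 1)).filter
    fun γ => ((∑ i, s i * γ i : ℕ) : ℝ) ≤ η

/-- The formal adjoint `𝓛*ψ` of `𝓛 = Σ_{|γ|=m} a_γ ∂^γ` applied to a real test function. -/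
def Lstar (s : Fin d → ℕ) (m : ℕ) (a : (Fin d → ℕ) → ℂ) (ψ : (Fin d → ℝ) → ℝ) :
    (Fin d → ℝ) → ℂ :=
  fun y => ∑ γ ∈ midxEq s m, ((-1 : ℂ) ^ (∑ i, γ i)) * a γ * (pderivM γ ψ y : ℂ)

/-- The distributional pairing `⟨𝓛f, ψ⟩ := ∫_D f ⋅ 𝓛*ψ`. -/
def Lpair (s : Fin d → ℕ) (m : ℕ) (a : (Fin d → ℕ) → ℂ) (D : Set (Fin d → ℝ))
    (f : (Fin d → ℝ) → ℂ) (ψ : (Fin d → ℝ) → ℝ) : ℂ :=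
  ∫ y in D, f y * Lstar s m a ψ y

/-- The negative Hölder norm of `𝓛f` on `A ⊆ D` (pairing integrals taken over `D`),
with exponent `β < 0`, i.e. the sup of `λ^{-β} |⟨𝓛f, φ_y^λ⟩|` over `φ ∈ ℬ_{⌈-β⌉}`,
`y ∈ A` and `λ > 0` with `B_λ(y) ⊆ A`. -/
def LnegOn (s : Fin d → ℕ) (m : ℕ) (a : (Fin d → ℕ) → ℂ) (D A : Set (Fin d → ℝ))
    (β : ℝ) (f : (Fin d → ℝ) → ℂ) : ℝ≥0∞ :=
  ⨆ φ : TestB s ⌈-β⌉₊, ⨆ y : A, ⨆ lam : {l : ℝ // 0 < l ∧ aball s y.1 l ⊆ A},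
    ENNReal.ofReal (lam.1 ^ (-β) *
      ‖Lpair s m a D f (tscale s φ.toFun y.1 lam.1)‖)

/-- The `G^{γ'}(D)` seminorm of the distributional germ `𝓛U`, for `γ' < 0`. -/
def LnegSemi (s : Fin d → ℕ) (m : ℕ) (a : (Fin d → ℕ) → ℂ) (D : Set (Fin d → ℝ))
    (γ' : ℝ) (U : (Fin d → ℝ) → (Fin d → ℝ) → ℂ) : ℝ≥0∞ :=
  ⨆ φ : TestB s ⌈-γ'⌉₊, ⨆ x : D, ⨆ lam : {l : ℝ // 0 < l ∧ aball s x.1 l ⊆ D},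
    ENNReal.ofReal (lam.1 ^ (-γ') *
      ‖Lpair s m a D (U x.1) (tscale s φ.toFun x.1 lam.1)‖)

/-- Ellipticity: the symbol `Σ_{|γ|=m} a_γ (iξ)^γ` does not vanish for `ξ ≠ 0`. -/
def IsElliptic (s : Fin d → ℕ) (m : ℕ) (a : (Fin d → ℕ) → ℂ) : Prop :=
  ∀ ξ : Fin d → ℝ, ξ ≠ 0 →
    (∑ γ ∈ midxEq s m, a γ * ∏ j, (Complex.I * (ξ j : ℂ)) ^ γ j) ≠ 0

open Classical in
/-- Coefficients of the Laplacian `Δ = Σ_j ∂_j^2`. -/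
def laplCoeff : (Fin d → ℕ) → ℂ :=
  fun γ => if ∃ j : Fin d, γ = Pi.single j 2 then 1 else 0

/-- Classical Hölder seminorm of a function on the set `A`, valued in `[0,∞]`. -/
def holderSemi (s : Fin d → ℕ) (A : Set (Fin d → ℝ)) (α : ℝ)
    (f : (Fin d → ℝ) → ℂ) : ℝ≥0∞ :=
  ⨆ y : A, ⨆ z : A, ⨆ _ : y.1 ≠ z.1,
    ENNReal.ofReal (‖f y.1 - f z.1‖ / adist s y.1 z.1 ^ α)

/-- Polynomial-corrected Hölder seminorm of a function on the set `A`. -/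
def holderSemiP (s : Fin d → ℕ) (A : Set (Fin d → ℝ)) (α : ℝ)
    (f : (Fin d → ℝ) → ℂ) : ℝ≥0∞ :=
  ⨅ M : {M : ℝ // 0 < M ∧ ∀ y ∈ A, ∃ P : (Fin d → ℝ) → ℂ,
      IsAnisoPoly s (⌊α⌋ : ℝ) P ∧
      ∀ z ∈ A, ‖f z - P z‖ ≤ M * adist s z y ^ α}, ENNReal.ofReal M.1

/-! ### Parabolic setting -/

/-- The parabolic scaling on `ℝ^{1+d}`. -/
def spar (d : ℕ) : Fin (d + 1) → ℕ := Fin.cons 2 fun _ => 1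

/-- The adjoint heat operator `ψ ↦ -∂_t ψ - Δ_x ψ` (as a complex valued function). -/
def heatStar (d : ℕ) (ψ : (Fin (d + 1) → ℝ) → ℝ) : (Fin (d + 1) → ℝ) → ℂ :=
  fun y => ((- pderiv1 (0 : Fin (d + 1)) ψ y
    - ∑ j : Fin d, pderivM (Pi.single j.succ 2) ψ y : ℝ) : ℂ)

/-- Pairing `⟨(∂_t - Δ)f, ψ⟩ := ∫_D f ⋅ (-∂_t ψ - Δψ)`. -/
def heatPair (d : ℕ) (D : Set (Fin (d + 1) → ℝ)) (f : (Fin (d + 1) → ℝ) → ℂ)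
    (ψ : (Fin (d + 1) → ℝ) → ℝ) : ℂ :=
  ∫ y in D, f y * heatStar d ψ y

/-- The `G^{γ'}(D)` seminorm of `(∂_t - Δ)U` for `γ' < 0`. -/
def heatNegSemi (d : ℕ) (D : Set (Fin (d + 1) → ℝ)) (γ' : ℝ)
    (U : (Fin (d + 1) → ℝ) → (Fin (d + 1) → ℝ) → ℂ) : ℝ≥0∞ :=
  ⨆ φ : TestB (spar d) ⌈-γ'⌉₊, ⨆ x : D,
    ⨆ lam : {l : ℝ // 0 < l ∧ aball (spar d) x.1 l ⊆ D},
      ENNReal.ofReal (lam.1 ^ (-γ') *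
        ‖heatPair d D (U x.1) (tscale (spar d) φ.toFun x.1 lam.1)‖)

/-! ### Discrete setting -/

/-- The lattice point of `Λ_ε` indexed by `k ∈ ℤ^d`. -/
def latt (s : Fin d → ℕ) (ε : ℝ) (k : Fin d → ℤ) : Fin d → ℝ :=
  fun i => ε ^ (s i) * k i

/-- The lattice `Λ_ε = ε^{s_1}ℤ × ⋯ × ε^{s_d}ℤ` as a subset of `ℝ^d`. -/
def lattSet (s : Fin d → ℕ) (ε : ℝ) : Set (Fin d → ℝ) :=
  Set.range (latt s ε)

/-- Forward difference operator `D_{ε,j}`. -/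
def fdiff (s : Fin d → ℕ) (ε : ℝ) (j : Fin d) (u : (Fin d → ℝ) → ℂ) :
    (Fin d → ℝ) → ℂ :=
  fun k => (((ε ^ s j)⁻¹ : ℝ) : ℂ) * (u (k + (ε ^ s j) • (Pi.single j 1 : Fin d → ℝ)) - u k)

/-- Backward difference operator `D̄_{ε,j}`. -/
def bdiff (s : Fin d → ℕ) (ε : ℝ) (j : Fin d) (u : (Fin d → ℝ) → ℂ) :
    (Fin d → ℝ) → ℂ :=
  fun k => (((ε ^ s j)⁻¹ : ℝ) : ℂ) * (u k - u (k - (ε ^ s j) • (Pi.single j 1 : Fin d → ℝ)))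

/-- Iterated forward difference `D_ε^γ`. -/
def fdiffM (s : Fin d → ℕ) (ε : ℝ) (γ : Fin d → ℕ) (u : (Fin d → ℝ) → ℂ) :
    (Fin d → ℝ) → ℂ :=
  (List.finRange d).foldr (fun j v => (fdiff s ε j)^[γ j] v) u

/-- Iterated backward difference `D̄_ε^δ`. -/
def bdiffM (s : Fin d → ℕ) (ε : ℝ) (δ : Fin d → ℕ) (u : (Fin d → ℝ) → ℂ) :
    (Fin d → ℝ) → ℂ :=
  (List.finRange d).foldr (fun j v => (bdiff s ε j)^[δ j] v) u

/-- The discrete Laplacian `Δ_ε` (isotropic scaling). -/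
def discLap (ε : ℝ) (u : (Fin d → ℝ) → ℂ) : (Fin d → ℝ) → ℂ :=
  fun y => (((ε ^ 2)⁻¹ : ℝ) : ℂ) *
    ∑ j : Fin d, ((u (y + ε • (Pi.single j 1 : Fin d → ℝ)) - u y) + (u (y - ε • (Pi.single j 1 : Fin d → ℝ)) - u y))

/-- The discrete pairing `⟨f, g⟩_ε := ε^{s_1+⋯+s_d} Σ_{k ∈ Λ_ε} f(k) g(k)`. -/
def dpair (s : Fin d → ℕ) (ε : ℝ) (f : (Fin d → ℝ) → ℂ) (g : (Fin d → ℝ) → ℝ) : ℂ :=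
  ((ε ^ (∑ i, s i) : ℝ) : ℂ) * ∑' k : Fin d → ℤ, f (latt s ε k) * (g (latt s ε k) : ℂ)

/-- The discrete `G^{γ'}(Λ_ε)` seminorm of a germ `V` on `Λ_ε`, for `γ' < 0`. -/
def dnegSemi (s : Fin d → ℕ) (ε : ℝ) (γ' : ℝ)
    (V : (Fin d → ℝ) → (Fin d → ℝ) → ℂ) : ℝ≥0∞ :=
  ⨆ φ : TestB s ⌈-γ'⌉₊, ⨆ k : Fin d → ℤ, ⨆ lam : {l : ℝ // ε ≤ l},
    ENNReal.ofReal (lam.1 ^ (-γ') *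
      ‖dpair s ε (V (latt s ε k)) (tscale s φ.toFun (latt s ε k) lam.1)‖)

/-- Pairs of multi-indices with `|γ| + |δ| = m`. -/
def pairsEq (s : Fin d → ℕ) (m : ℕ) : Finset ((Fin d → ℕ) × (Fin d → ℕ)) :=
  ((Fintype.piFinset fun _ => Finset.range (m + 1)) ×ˢ
      (Fintype.piFinset fun _ => Finset.range (m + 1))).filter
    fun p => (∑ i, s i * p.1 i) + (∑ i, s i * p.2 i) = m

/-- The discrete difference operator `L_ε = Σ_{|γ|+|δ|=m} a_{γ,δ} D_ε^γ D̄_ε^δ`. -/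
def diffOpPair (s : Fin d → ℕ) (ε : ℝ) (m : ℕ)
    (a : (Fin d → ℕ) × (Fin d → ℕ) → ℂ) (u : (Fin d → ℝ) → ℂ) :
    (Fin d → ℝ) → ℂ :=
  fun y => ∑ p ∈ pairsEq s m, a p * fdiffM s ε p.1 (bdiffM s ε p.2 u) y

/-- The discrete symbol component `ξ^ε_{θ,j} = i ε^{-s_j} (1 - e^{i ε^{s_j} θ_j})`. -/
def xiSym (s : Fin d → ℕ) (ε : ℝ) (θ : Fin d → ℝ) (j : Fin d) : ℂ :=
  Complex.I * (((ε ^ s j)⁻¹ : ℝ) : ℂ) *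
    (1 - Complex.exp (Complex.I * ((ε ^ s j * θ j : ℝ) : ℂ)))

/-- The discrete symbol `L̂_ε(θ)`. -/
def Lhatε (s : Fin d → ℕ) (m : ℕ) (a : (Fin d → ℕ) × (Fin d → ℕ) → ℂ)
    (ε : ℝ) (θ : Fin d → ℝ) : ℂ :=
  ∑ p ∈ pairsEq s m, a p * (∏ j, (Complex.I * xiSym s ε θ j) ^ p.1 j) *
    (∏ j, (Complex.I * (starRingEnd ℂ) (xiSym s ε θ j)) ^ p.2 j)

/-- The continuous symbol `L̂(ξ) = Σ a_{γ,δ} (iξ)^{γ+δ}`. -/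
def LhatC (s : Fin d → ℕ) (m : ℕ) (a : (Fin d → ℕ) × (Fin d → ℕ) → ℂ)
    (ξ : Fin d → ℝ) : ℂ :=
  ∑ p ∈ pairsEq s m, a p * ∏ j, (Complex.I * (ξ j : ℂ)) ^ (p.1 j + p.2 j)

/-! ### Locally uniform seminorms -/

/-- The locally uniform supremum `‖U‖_{<R}`, valued in `[0,∞]`. -/
def germSup (s : Fin d → ℕ) (R : ℝ)
    (U : (Fin d → ℝ) → (Fin d → ℝ) → ℂ) : ℝ≥0∞ :=
  ⨆ p : {p : (Fin d → ℝ) × (Fin d → ℝ) // adist s p.1 p.2 < R},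
    ENNReal.ofReal (‖U p.1.1 p.1.2‖)

/-- The locally uniform seminorm `[U]_{G_R^η}`. -/
def germNormLoc (s : Fin d → ℕ) (R η : ℝ)
    (U : (Fin d → ℝ) → (Fin d → ℝ) → ℂ) : ℝ≥0∞ :=
  ⨆ p : {p : (Fin d → ℝ) × (Fin d → ℝ) // 0 < adist s p.1 p.2 ∧ adist s p.1 p.2 < R},
    ENNReal.ofReal (‖U p.1.1 p.1.2‖ / adist s p.1.1 p.1.2 ^ η)

/-- The locally uniform seminorm `[U]_{G_R^{η,α}}`. -/
def germHALoc (s : Fin d → ℕ) (R η α : ℝ)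
    (U : (Fin d → ℝ) → (Fin d → ℝ) → ℂ) : ℝ≥0∞ :=
  ⨆ p : {p : (Fin d → ℝ) × (Fin d → ℝ) // 0 < adist s p.1 p.2 ∧ adist s p.1 p.2 < R},
    ⨅ P : {P : (Fin d → ℝ) → ℂ // IsAnisoPoly s (⌊η⌋ : ℝ) P},
      ⨆ z : {z : Fin d → ℝ // 0 < adist s p.1.2 z ∧ adist s p.1.2 z < R},
        ENNReal.ofReal (‖U p.1.1 z.1 - U p.1.2 z.1 - P.1 z.1‖ /
          (adist s p.1.2 z.1 ^ α * (adist s p.1.1 p.1.2 + adist s p.1.2 z.1) ^ (η - α)))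

/-- The locally uniform seminorm `[𝓛U]_{G_R^β}` for `β < 0` (pairings over all of `ℝ^d`). -/
def LnegSemiLoc (s : Fin d → ℕ) (m : ℕ) (a : (Fin d → ℕ) → ℂ) (R β : ℝ)
    (U : (Fin d → ℝ) → (Fin d → ℝ) → ℂ) : ℝ≥0∞ :=
  ⨆ φ : TestB s ⌈-β⌉₊, ⨆ x : Fin d → ℝ, ⨆ lam : {l : ℝ // 0 < l ∧ l < R},
    ENNReal.ofReal (lam.1 ^ (-β) *
      ‖Lpair s m a Set.univ (U x) (tscale s φ.toFun x lam.1)‖)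

/-!
`S^R_w` is affine with Jacobian `R^{s_1+⋯+s_d}`, and composing with it multiplies `∂^γ` by
`R^{|γ|}`, so every derivative in `𝓛*` picks up `R^m`. Since `φ_x^λ ∘ S^R_w` is a multiple of
`φ_{S x}^{Rλ}`, the change of variables `z = S^R_w y` gives
`⟨𝓛(S^R_w U)_x, φ_x^λ⟩ = R^m ⟨𝓛U_{S x}, φ_{S x}^{Rλ}⟩`. Moreover `S^R_w` maps `B_λ(x)` onto
`B_{Rλ}(S x)`, so `(x, λ) ↦ (S x, Rλ)` matches the admissible pairs of the two suprema, and the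
weight `λ^{-γ'} = R^{γ'} (Rλ)^{-γ'}` supplies the remaining factor `R^{γ'}`.
-/

section Scaling

variable {s : Fin d → ℕ} {R : ℝ}

def diagScale (s : Fin d → ℕ) (R : ℝ) : (Fin d → ℝ) →ₗ[ℝ] (Fin d → ℝ) :=
  Matrix.toLin' (Matrix.diagonal fun i => R ^ s i)

lemma diagScale_apply (y : Fin d → ℝ) (i : Fin d) : diagScale s R y i = R ^ s i * y i := by
  simp [diagScale, Matrix.mulVec_diagonal]

lemma det_diagScale : LinearMap.det (diagScale s R) = R ^ ∑ i, s i := by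
  rw [diagScale, LinearMap.det_toLin', Matrix.det_diagonal, Finset.prod_pow_eq_pow_sum]

lemma smap_eq_add_diagScale (w : Fin d → ℝ) : smap s R w = fun y => w + diagScale s R y := by
  ext y i
  simp [smap, diagScale_apply]

lemma continuous_smap (w : Fin d → ℝ) : Continuous (smap s R w) := by
  rw [smap_eq_add_diagScale]
  exact continuous_const.add (LinearMap.continuous_of_finiteDimensional _)

lemma smap_injective (hR : R ≠ 0) (w : Fin d → ℝ) : Function.Injective (smap s R w) := by
  intro x y h
  ext i
  have := congrFun h i
  simp only [smap, add_right_inj] at this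
  exact mul_left_cancel₀ (pow_ne_zero _ hR) this

lemma smap_surjective (hR : R ≠ 0) (w : Fin d → ℝ) : Function.Surjective (smap s R w) := by
  intro z
  refine ⟨fun i => (R ^ s i)⁻¹ * (z i - w i), funext fun i => ?_⟩
  simp [smap, mul_inv_cancel_left₀ (pow_ne_zero (s i) hR)]

lemma adist_smap (hs : ∀ i, 0 < s i) (hR : 0 < R) (w x y : Fin d → ℝ) :
    adist s (smap s R w x) (smap s R w y) = R * adist s x y := by
  rw [adist, adist, Finset.mul_sum]
  refine Finset.sum_congr rfl fun i _ => ?_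
  have hsi : (s i : ℝ) ≠ 0 := Nat.cast_ne_zero.2 (hs i).ne'
  rw [smap, smap, add_sub_add_left_eq_sub, ← mul_sub, abs_mul, abs_of_pos (by positivity),
    Real.mul_rpow (by positivity) (abs_nonneg _), ← Real.rpow_natCast,
    ← Real.rpow_mul hR.le, mul_inv_cancel₀ hsi, Real.rpow_one]

lemma preimage_smap_aball (hs : ∀ i, 0 < s i) (hR : 0 < R) (w x : Fin d → ℝ) (lam : ℝ) :
    smap s R w ⁻¹' aball s (smap s R w x) (R * lam) = aball s x lam := by
  ext y
  simp only [Set.mem_preimage, aball, Set.mem_ofPred_eq, adist_smap hs hR]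
  exact mul_lt_mul_iff_right₀ hR

lemma pderiv1_const_mul (c : ℝ) (f : (Fin d → ℝ) → ℝ) (j : Fin d) :
    pderiv1 j (fun y => c * f y) = fun y => c * pderiv1 j f y := by
  ext y
  change fderiv ℝ (c • f) y _ = _
  rw [fderiv_const_smul_field]
  rfl

lemma pderiv1_comp_smap (hR : R ≠ 0) (w : Fin d → ℝ) (f : (Fin d → ℝ) → ℝ) (j : Fin d) :
    pderiv1 j (fun y => f (smap s R w y)) = fun y => R ^ s j * pderiv1 j f (smap s R w y) := by
  have hdet : LinearMap.det (diagScale s R) ≠ 0 := by rw [det_diagScale]; exact pow_ne_zero _ hR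
  set e := ((diagScale s R).equivOfDetNeZero hdet).toContinuousLinearEquiv
  have he : (fun y => f (smap s R w y)) = (fun z => f (w + z)) ∘ e := by
    rw [smap_eq_add_diagScale]; rfl
  have hsingle : e (Pi.single j 1) = R ^ s j • Pi.single j 1 := by
    ext i
    change diagScale s R _ i = _
    rcases eq_or_ne i j with rfl | h <;> simp [diagScale_apply, *]
  ext y
  rw [pderiv1, he, ContinuousLinearEquiv.comp_right_fderiv, ContinuousLinearMap.comp_apply,
    fderiv_comp_add_left, ContinuousLinearEquiv.coe_coe, hsingle, map_smul, smul_eq_mul,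
    smap_eq_add_diagScale]
  rfl

lemma iterate_pderiv1_const_mul (c : ℝ) (j : Fin d) (n : ℕ) (f : (Fin d → ℝ) → ℝ) :
    (pderiv1 j)^[n] (fun y => c * f y) = fun y => c * (pderiv1 j)^[n] f y :=
  Function.Commute.iterate_left (g := fun g y => c * g y) (fun g => pderiv1_const_mul c g j) n f

lemma pderivM_const_mul (c : ℝ) (γ : Fin d → ℕ) (f : (Fin d → ℝ) → ℝ) :
    pderivM γ (fun y => c * f y) = fun y => c * pderivM γ f y := by
  rw [pderivM, pderivM]
  induction List.finRange d with
  | nil => rfl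
  | cons j l ih => rw [List.foldr_cons, List.foldr_cons, ih, iterate_pderiv1_const_mul]

lemma iterate_pderiv1_comp_smap (hR : R ≠ 0) (w : Fin d → ℝ) (j : Fin d) (n : ℕ)
    (f : (Fin d → ℝ) → ℝ) :
    (pderiv1 j)^[n] (fun y => f (smap s R w y)) =
      fun y => (R ^ s j) ^ n * (pderiv1 j)^[n] f (smap s R w y) := by
  induction n with
  | zero => ext y; simp
  | succ n ih =>
    rw [Function.iterate_succ_apply', ih, pderiv1_const_mul, pderiv1_comp_smap hR,
      Function.iterate_succ_apply']
    ext y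
    ring

lemma pderivM_comp_smap (hR : R ≠ 0) (w : Fin d → ℝ) (γ : Fin d → ℕ) (f : (Fin d → ℝ) → ℝ) :
    pderivM γ (fun y => f (smap s R w y)) =
      fun y => R ^ (∑ i, s i * γ i) * pderivM γ f (smap s R w y) := by
  have hfoldr : ∀ l : List (Fin d),
      l.foldr (fun j ψ => (pderiv1 j)^[γ j] ψ) (fun y => f (smap s R w y)) = fun y =>
        (l.map fun j => (R ^ s j) ^ γ j).prod *
          l.foldr (fun j ψ => (pderiv1 j)^[γ j] ψ) f (smap s R w y) := by
    intro l
    induction l with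
    | nil => ext y; simp
    | cons j l ih =>
      rw [List.foldr_cons, ih, iterate_pderiv1_const_mul, iterate_pderiv1_comp_smap hR]
      ext y
      simp only [List.foldr_cons, List.map_cons, List.prod_cons]
      ring
  rw [pderivM, pderivM, hfoldr, ← List.ofFn_eq_map, List.prod_ofFn, ← Finset.prod_pow_eq_pow_sum]
  simp only [pow_mul]

variable (m : ℕ) (a : (Fin d → ℕ) → ℂ)

lemma Lstar_const_mul (c : ℝ) (ψ : (Fin d → ℝ) → ℝ) :
    Lstar s m a (fun y => c * ψ y) = fun y => c * Lstar s m a ψ y := by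
  ext y
  simp only [Lstar, pderivM_const_mul, Finset.mul_sum]
  refine Finset.sum_congr rfl fun γ _ => ?_
  push_cast
  ring

lemma Lstar_comp_smap (hR : R ≠ 0) (w : Fin d → ℝ) (ψ : (Fin d → ℝ) → ℝ) :
    Lstar s m a (fun y => ψ (smap s R w y)) = fun y => R ^ m * Lstar s m a ψ (smap s R w y) := by
  ext y
  simp only [Lstar, Finset.mul_sum]
  refine Finset.sum_congr rfl fun γ hγ => ?_
  rw [pderivM_comp_smap hR, (Finset.mem_filter.1 hγ).2]
  push_cast
  ring

lemma map_smap_volume (hR : R ≠ 0) (w : Fin d → ℝ) :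
    Measure.map (smap s R w) volume = ENNReal.ofReal |(R ^ ∑ i, s i)⁻¹| • volume := by
  have hdet : (Matrix.diagonal fun i => R ^ s i).det ≠ 0 := by
    rw [Matrix.det_diagonal, Finset.prod_pow_eq_pow_sum]; exact pow_ne_zero _ hR
  have hlin : Measurable (diagScale s R) :=
    (LinearMap.continuous_of_finiteDimensional _).measurable
  rw [smap_eq_add_diagScale, ← Function.comp_def (fun z => w + z),
    ← Measure.map_map (measurable_const_add w) hlin, diagScale,
    Real.map_matrix_volume_pi_eq_smul_volume_pi hdet, Measure.map_smul,
    Measure.IsAddLeftInvariant.map_add_left_eq_self, Matrix.det_diagonal,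
    Finset.prod_pow_eq_pow_sum]

lemma setIntegral_comp_smap {E : Type*} [NormedAddCommGroup E] [NormedSpace ℝ E] (hR : R ≠ 0)
    (w : Fin d → ℝ) (F : (Fin d → ℝ) → E) (D : Set (Fin d → ℝ)) :
    ∫ y in smap s R w ⁻¹' D, F (smap s R w y) = |(R ^ ∑ i, s i)⁻¹| • ∫ z in D, F z := by
  rw [← ((continuous_smap w).measurableEmbedding (smap_injective hR w)).setIntegral_map,
    map_smap_volume hR, Measure.restrict_smul, integral_smul_measure,
    ENNReal.toReal_ofReal (abs_nonneg _)]

lemma tscale_eq_comp_smap (hR : R ≠ 0) (w : Fin d → ℝ) (φ : (Fin d → ℝ) → ℝ)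
    (x : Fin d → ℝ) (lam : ℝ) :
    tscale s φ x lam =
      fun y => R ^ (∑ i, s i) * tscale s φ (smap s R w x) (R * lam) (smap s R w y) := by
  ext y
  have hRs : R ^ (∑ i, s i) ≠ 0 := pow_ne_zero _ hR
  have harg : (fun i => ((R * lam) ^ s i)⁻¹ * (smap s R w y i - smap s R w x i)) =
      fun i => (lam ^ s i)⁻¹ * (y i - x i) := by
    ext i
    have hRi : R ^ s i ≠ 0 := pow_ne_zero _ hR
    simp only [smap, mul_pow, mul_inv]
    field_simp
    ring
  rw [tscale, tscale, harg, mul_pow, mul_inv, mul_assoc, mul_inv_cancel_left₀ hRs]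

lemma Lpair_const_mul (D : Set (Fin d → ℝ)) (f : (Fin d → ℝ) → ℂ) (c : ℝ)
    (ψ : (Fin d → ℝ) → ℝ) :
    Lpair s m a D f (fun y => c * ψ y) = c * Lpair s m a D f ψ := by
  simp only [Lpair, Lstar_const_mul, ← integral_const_mul]
  congr 1
  ext y
  ring

lemma Lpair_comp_smap (hR : 0 < R) (w : Fin d → ℝ) (D : Set (Fin d → ℝ))
    (f : (Fin d → ℝ) → ℂ) (ψ : (Fin d → ℝ) → ℝ) :
    Lpair s m a (smap s R w ⁻¹' D) (fun y => f (smap s R w y)) (fun y => ψ (smap s R w y)) =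
      ((R ^ m / R ^ ∑ i, s i : ℝ) : ℂ) * Lpair s m a D f ψ := by
  simp only [Lpair, Lstar_comp_smap m a hR.ne', mul_left_comm _ ((R : ℂ) ^ m)]
  rw [integral_const_mul, setIntegral_comp_smap hR.ne' w (fun z => f z * Lstar s m a ψ z),
    abs_of_pos (by positivity), Complex.real_smul]
  push_cast
  ring

lemma Lpair_sgerm_tscale (hR : 0 < R) (w : Fin d → ℝ) (D : Set (Fin d → ℝ))
    (U : (Fin d → ℝ) → (Fin d → ℝ) → ℂ) (φ : (Fin d → ℝ) → ℝ) (x : Fin d → ℝ) (lam : ℝ) :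
    Lpair s m a (smap s R w ⁻¹' D) (sgerm s R w U x) (tscale s φ x lam) =
      R ^ m * Lpair s m a D (U (smap s R w x)) (tscale s φ (smap s R w x) (R * lam)) := by
  rw [tscale_eq_comp_smap hR.ne' w, Lpair_const_mul]
  unfold sgerm
  rw [Lpair_comp_smap m a hR]
  have hRs : (R : ℂ) ^ (∑ i, s i) ≠ 0 := pow_ne_zero _ (by exact_mod_cast hR.ne')
  push_cast
  field_simp

def ballsIn (s : Fin d → ℕ) (D : Set (Fin d → ℝ)) : Set ((Fin d → ℝ) × ℝ) :=
  {p | p.1 ∈ D ∧ 0 < p.2 ∧ aball s p.1 p.2 ⊆ D}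

lemma LnegSemi_eq_iSup_ballsIn (D : Set (Fin d → ℝ)) (γ' : ℝ)
    (U : (Fin d → ℝ) → (Fin d → ℝ) → ℂ) :
    LnegSemi s m a D γ' U = ⨆ φ : TestB s ⌈-γ'⌉₊, ⨆ p ∈ ballsIn s D,
      ENNReal.ofReal (p.2 ^ (-γ') * ‖Lpair s m a D (U p.1) (tscale s φ.toFun p.1 p.2)‖) := by
  simp only [LnegSemi, ballsIn, Set.mem_ofPred_eq, iSup_prod, iSup_and, iSup_subtype]
  exact iSup_congr fun φ => iSup_congr fun x => iSup_comm

lemma preimage_ballsIn (hs : ∀ i, 0 < s i) (hR : 0 < R) (w : Fin d → ℝ) (D : Set (Fin d → ℝ)) :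
    Prod.map (smap s R w) (R * ·) ⁻¹' ballsIn s D = ballsIn s (smap s R w ⁻¹' D) := by
  ext ⟨x, lam⟩
  have hball : aball s (smap s R w x) (R * lam) = smap s R w '' aball s x lam := by
    rw [← preimage_smap_aball hs hR w x lam, Set.image_preimage_eq _ (smap_surjective hR.ne' w)]
  simp only [ballsIn, Set.mem_preimage, Prod.map_fst, Prod.map_snd, Set.mem_ofPred_eq, hball,
    Set.image_subset_iff, mul_pos_iff_of_pos_left hR]

lemma rpow_mul_norm_Lpair_sgerm_tscale (hR : 0 < R) (γ' : ℝ) (w : Fin d → ℝ)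
    (D : Set (Fin d → ℝ)) (U : (Fin d → ℝ) → (Fin d → ℝ) → ℂ) (φ : (Fin d → ℝ) → ℝ)
    (x : Fin d → ℝ) {lam : ℝ} (hlam : 0 ≤ lam) :
    lam ^ (-γ') * ‖Lpair s m a (smap s R w ⁻¹' D) (sgerm s R w U x) (tscale s φ x lam)‖ =
      R ^ (γ' + m) * ((R * lam) ^ (-γ') *
        ‖Lpair s m a D (U (smap s R w x)) (tscale s φ (smap s R w x) (R * lam))‖) := by
  rw [Lpair_sgerm_tscale m a hR, norm_mul, norm_pow, Complex.norm_real, Real.norm_of_nonneg hR.le,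
    Real.mul_rpow hR.le hlam, Real.rpow_add hR, Real.rpow_natCast, Real.rpow_neg hR.le]
  have hRγ : R ^ γ' ≠ 0 := (Real.rpow_pos_of_pos hR γ').ne'
  field_simp

end Scaling

theorem LnegSemi_smul_eq_general
    (d : ℕ) (s : Fin d → ℕ) (hs : ∀ i, 0 < s i)
    (m : ℕ) (a : (Fin d → ℕ) → ℂ)
    (D : Set (Fin d → ℝ))
    (γ' : ℝ) (R : ℝ) (hR : 0 < R) (w : Fin d → ℝ)
    (U : (Fin d → ℝ) → (Fin d → ℝ) → ℂ) :
    LnegSemi s m a (smap s R w ⁻¹' D) γ' (sgerm s R w U)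
      = ENNReal.ofReal (R ^ (γ' + (m : ℝ))) * LnegSemi s m a D γ' U := by
  set c := ENNReal.ofReal (R ^ (γ' + (m : ℝ)))
  set Φ := Prod.map (smap s R w) (R * ·)
  have hΦ : Function.Surjective Φ :=
    (smap_surjective hR.ne' w).prodMap (mul_left_surjective₀ hR.ne')
  rw [LnegSemi_eq_iSup_ballsIn, LnegSemi_eq_iSup_ballsIn, ENNReal.mul_iSup]
  refine iSup_congr fun φ => ?_
  set F := fun p : (Fin d → ℝ) × ℝ =>
    ENNReal.ofReal (p.2 ^ (-γ') * ‖Lpair s m a D (U p.1) (tscale s φ.toFun p.1 p.2)‖)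
  calc _ = ⨆ p, ⨆ _ : Φ p ∈ ballsIn s D, c * F (Φ p) := by
        rw [← preimage_ballsIn hs hR]
        refine iSup_congr fun p => iSup_congr fun hp => ?_
        rw [rpow_mul_norm_Lpair_sgerm_tscale m a hR γ' w D U φ.toFun p.1
          ((mul_pos_iff_of_pos_left hR).1 hp.2.1).le,
          ENNReal.ofReal_mul (Real.rpow_nonneg hR.le _)]
        rfl
    _ = ⨆ q, ⨆ _ : q ∈ ballsIn s D, c * F q :=
        hΦ.iSup_comp fun q => ⨆ _ : q ∈ ballsIn s D, c * F q
    _ = c * ⨆ q ∈ ballsIn s D, F q := by simp only [ENNReal.mul_iSup]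

/-- Scaling identity for the negative seminorm `[𝓛U]_{G^{γ'}}` under the
anisotropic rescaling `S^R_w`, for a constant-coefficient operator of anisotropic order `m`. -/
theorem LnegSemi_smul_eq
    (d : ℕ) (hd : 1 ≤ d) (s : Fin d → ℕ) (hs : ∀ i, 0 < s i)
    (m : ℕ) (a : (Fin d → ℕ) → ℂ)
    (D : Set (Fin d → ℝ)) (hD : IsOpen D)
    (γ' : ℝ) (hγ' : γ' < 0) (R : ℝ) (hR : 0 < R) (w : Fin d → ℝ)
    (U : (Fin d → ℝ) → (Fin d → ℝ) → ℂ) (hU : IsGerm D U) :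
    LnegSemi s m a (smap s R w ⁻¹' D) γ' (sgerm s R w U)
      = ENNReal.ofReal (R ^ (γ' + (m : ℝ))) * LnegSemi s m a D γ' U :=
  LnegSemi_smul_eq_general d s hs m a D γ' R hR w U

end GermSchauder
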